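/- Let a ∈ ℂ with a ≠ 0, and let F, G, H, K : ℝ² → ℂ be smooth functions of (x, t) satisfying the three bilinear relations: (i) a·D_t F·G − F G = − H K; (ii) a·D_x D_t F·G − D_x F·G − 2a·F G = D_x H·K − 2a·H K; and (iii) a·D_x D_t F·G − D_x F·G + (2/a)·F G = D_x K·H + (2/a)·K H. Then F and G satisfy a·D_x D_t F·G − D_x F·G − (a² − 1)·D_t F·G = 0 identically. -/
import Mathlib


noncomputable section

/-- Partial derivative with respect to the first variable (`x`). -/
def pd1 (F : ℝ → ℝ → ℂ) (x t : ℝ) : ℂ := deriv (fun u => F u t) x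

/-- Partial derivative with respect to the second variable (`t`). -/
def pd2 (F : ℝ → ℝ → ℂ) (x t : ℝ) : ℂ := deriv (fun v => F x v) t

/-- Hirota derivative `D_t F·G = F_t G − F G_t`. -/
def Dt (F G : ℝ → ℝ → ℂ) (x t : ℝ) : ℂ := pd2 F x t * G x t - F x t * pd2 G x t

/-- Hirota derivative `D_x F·G = F_x G − F G_x`. -/
def Dx (F G : ℝ → ℝ → ℂ) (x t : ℝ) : ℂ := pd1 F x t * G x t - F x t * pd1 G x t

/-- Hirota derivative `D_x D_t F·G = F_{xt}G − F_x G_t − F_t G_x + F G_{xt}`. -/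
def DxDt (F G : ℝ → ℝ → ℂ) (x t : ℝ) : ℂ :=
  pd2 (pd1 F) x t * G x t - pd1 F x t * pd2 G x t - pd2 F x t * pd1 G x t
    + F x t * pd2 (pd1 G) x t

/-- from the three bilinear relations
(i) `a D_t F·G − FG = −HK`,
(ii) `a D_x D_t F·G − D_x F·G − 2a FG = D_x H·K − 2a HK`,
(iii) `a D_x D_t F·G − D_x F·G + (2/a) FG = D_x K·H + (2/a) KH`,
it follows that `a D_x D_t F·G − D_x F·G − (a² − 1) D_t F·G = 0`. -/
theorem reduced_bilinear_equation (a : ℂ) (ha : a ≠ 0)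
    (F G H K : ℝ → ℝ → ℂ)
    (hF : ContDiff ℝ (⊤ : ℕ∞) (Function.uncurry F)) (hG : ContDiff ℝ (⊤ : ℕ∞) (Function.uncurry G))
    (hH : ContDiff ℝ (⊤ : ℕ∞) (Function.uncurry H)) (hK : ContDiff ℝ (⊤ : ℕ∞) (Function.uncurry K))
    (h1 : ∀ x t : ℝ, a * Dt F G x t - F x t * G x t = -(H x t * K x t))
    (h2 : ∀ x t : ℝ,
      a * DxDt F G x t - Dx F G x t - 2 * a * (F x t * G x t)
        = Dx H K x t - 2 * a * (H x t * K x t))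
    (h3 : ∀ x t : ℝ,
      a * DxDt F G x t - Dx F G x t + (2 / a) * (F x t * G x t)
        = Dx K H x t + (2 / a) * (K x t * H x t)) :
    ∀ x t : ℝ,
      a * DxDt F G x t - Dx F G x t - (a ^ 2 - 1) * Dt F G x t = 0 := by
  intro x t
  have e1 := h1 x t
  have e2 := h2 x t
  have e3 := h3 x t
  have hx : Dx K H x t = -(Dx H K x t) := by simp [Dx]; ring
  have key : a * (a * DxDt F G x t - Dx F G x t - (a ^ 2 - 1) * Dt F G x t) = 0 := by
    field_simp at e3
    linear_combination (a/2) * e2 + (1/2) * e3 + (a/2) * hx + (1 - a^2) * e1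
  rcases mul_eq_zero.mp key with h | h
  · exact absurd h ha
  · exact h
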